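/- Let n ≥ 2 and let k, l be integers with 0 ≤ l < k ≤ n − 1. Let λ ∈ ℝⁿ lie in the Gårding cone Γ_k and suppose S_k(λ)/C_n^k = S_l(λ)/C_n^l and S_{k+1}(λ)/C_n^{k+1} = S_k(λ)/C_n^k (i.e., equality holds in the Maclaurin inequality (k+1)S_{k+1}(λ) ≤ (n−k)S_k(λ)). Then all the components of λ are equal: λ_1 = λ_2 = ⋯ = λ_n. -/

import Mathlib

/-!
Write `P_j = S_j / C_n^j` for the normalized elementary symmetric means. Newton's inequalities
`P_{j-1} P_{j+1} ≤ P_j²` hold for every real vector. Since `P_0, …, P_k > 0` and `P_k = P_{k+1}`,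
a downward induction along Newton's inequalities shows that `P_0 ≤ P_1 ≤ ⋯ ≤ P_{k+1}`; together
with `P_l = P_k` this forces `P_{k-1} = P_k = P_{k+1}`, i.e. equality in Newton's inequality at
`k` with `P_{k+1} ≠ 0`, and that equality case forces all `λ_i` to be equal.

Newton's inequalities are proved by reduction to the variance inequality
`n (n - 1) (P_1² - P_2) = ∑ (λ_i - P_1)² ≥ 0`. By Rolle's theorem the derivative of
`∏ (X - λ_i)` has `n - 1` real roots, and their means `P_0, …, P_{n-1}` coincide with those of the
`λ_i`; this reduces `(P_{j-1}, P_j, P_{j+1})` to the top indices `(P_{m-2}, P_{m-1}, P_m)` of a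
vector of length `m = j + 1`. When no entry vanishes, passing to the reciprocals turns these into
`P_m² (P_2, P_1, P_0)` of the reciprocal vector; otherwise `P_m = 0` and there is nothing to prove.
-/

open scoped BigOperators

noncomputable section

/-- The k-th elementary symmetric polynomial of `λ ∈ ℝⁿ`; by definition
`Svec n m λ = 0` for `m > n` and `Svec n 0 λ = 1`. -/
def Svec (n k : ℕ) (lam : Fin n → ℝ) : ℝ :=
  ∑ s ∈ Finset.powersetCard k (Finset.univ : Finset (Fin n)), ∏ i ∈ s, lam i

/-- Integer-indexed version, with the convention `S_m = 0` for `m < 0`. -/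
def SvecZ (n : ℕ) (k : ℤ) (lam : Fin n → ℝ) : ℝ :=
  if 0 ≤ k then Svec n k.toNat lam else 0

/-- The Gårding cone `Γ_k = {λ : S_1(λ) > 0, …, S_k(λ) > 0}`. -/
def GardingCone (n k : ℕ) : Set (Fin n → ℝ) :=
  {lam | ∀ i : ℕ, 1 ≤ i → i ≤ k → 0 < Svec n i lam}

namespace Multiset

section CommSemiring

variable {R : Type*} [CommSemiring R]

theorem esymm_zero (s : Multiset R) : s.esymm 0 = 1 := by
  simp [esymm]

theorem esymm_one (s : Multiset R) : s.esymm 1 = s.sum := by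
  simp [esymm, powersetCard_one]

theorem esymm_card (s : Multiset R) : s.esymm (card s) = s.prod := by
  simp [esymm, powersetCard_self]

theorem esymm_eq_zero_of_card_lt {s : Multiset R} {k : ℕ} (h : card s < k) : s.esymm k = 0 := by
  simp [esymm, powersetCard_eq_empty k h]

theorem esymm_cons_succ (a : R) (s : Multiset R) (k : ℕ) :
    (a ::ₘ s).esymm (k + 1) = s.esymm (k + 1) + a * s.esymm k := by
  simp only [esymm, powersetCard_cons, map_add, sum_add, map_map, Function.comp_def, prod_cons,
    sum_map_mul_left]

end CommSemiring

section CommRing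

variable {R : Type*} [CommRing R]

theorem sum_map_sq_eq_esymm (s : Multiset R) :
    (s.map (· ^ 2)).sum = s.esymm 1 ^ 2 - 2 * s.esymm 2 := by
  induction s using Multiset.induction_on with
  | empty => simp [esymm, powersetCard_zero_right]
  | cons a s ih =>
    rw [map_cons, sum_cons, ih, esymm_cons_succ, esymm_cons_succ, esymm_zero, esymm_one]
    ring

theorem sum_map_sub_sq (s : Multiset R) (c : R) :
    (s.map fun a => (a - c) ^ 2).sum = (s.map (· ^ 2)).sum - 2 * c * s.sum + card s * c ^ 2 := by
  induction s using Multiset.induction_on with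
  | empty => simp
  | cons a s ih =>
    rw [map_cons, sum_cons, ih, map_cons, sum_cons, sum_cons, card_cons]
    push_cast
    ring

end CommRing

theorem esymm_eq_prod_mul_esymm_inv {K : Type*} [Field K] {s : Multiset K} (h0 : (0 : K) ∉ s)
    {i j : ℕ} (hij : i + j = card s) : s.esymm i = s.prod * (s.map Inv.inv).esymm j := by
  induction s using Multiset.induction_on generalizing i j with
  | empty =>
    obtain ⟨rfl, rfl⟩ : i = 0 ∧ j = 0 := by simpa using hij
    simp [esymm]
  | cons a s ih =>
    have ha : a ≠ 0 := fun h => h0 (h ▸ mem_cons_self a s)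
    have hs : (0 : K) ∉ s := fun h => h0 (mem_cons_of_mem h)
    rw [card_cons] at hij
    rcases i with _ | i
    · obtain rfl : j = card (map Inv.inv (a ::ₘ s)) := by rw [card_map, card_cons]; omega
      rw [esymm_zero, esymm_card, prod_map_inv', mul_inv_cancel₀ (prod_ne_zero h0)]
    rcases j with _ | j
    · obtain rfl : i = card s := by omega
      rw [esymm_zero, mul_one, ← card_cons a, esymm_card]
    rw [esymm_cons_succ, map_cons, esymm_cons_succ, ih hs (i := i + 1) (j := j) (by omega),
      ih hs (i := i) (j := j + 1) (by omega), prod_cons]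
    field_simp
    ring

def esymmMean (s : Multiset ℝ) (k : ℕ) : ℝ :=
  s.esymm k / (card s).choose k

theorem esymmMean_zero (s : Multiset ℝ) : s.esymmMean 0 = 1 := by
  simp [esymmMean, esymm_zero]

theorem esymmMean_card (s : Multiset ℝ) : s.esymmMean (card s) = s.prod := by
  simp [esymmMean, esymm_card]

theorem esymmMean_eq_zero_of_card_lt {s : Multiset ℝ} {k : ℕ} (h : card s < k) :
    s.esymmMean k = 0 := by
  rw [esymmMean, esymm_eq_zero_of_card_lt h, zero_div]

theorem esymmMean_pos {s : Multiset ℝ} {k : ℕ} (h : 0 < s.esymm k) : 0 < s.esymmMean k := by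
  have hk : k ≤ card s := by
    by_contra! hk
    exact h.ne' (esymm_eq_zero_of_card_lt hk)
  exact div_pos h (Nat.cast_pos.2 (Nat.choose_pos hk))

theorem esymmMean_eq_prod_mul_esymmMean_inv {s : Multiset ℝ} (h0 : (0 : ℝ) ∉ s) {i j : ℕ}
    (hij : i + j = card s) : s.esymmMean i = s.prod * (s.map Inv.inv).esymmMean j := by
  rw [esymmMean, esymmMean, esymm_eq_prod_mul_esymm_inv h0 hij, card_map, ← hij,
    Nat.choose_symm_add, mul_div_assoc]

theorem sum_map_sq_sub_esymmMean_one {s : Multiset ℝ} (hs : 2 ≤ card s) :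
    (s.map fun a => (a - s.esymmMean 1) ^ 2).sum
      = card s * (card s - 1) * (s.esymmMean 1 ^ 2 - s.esymmMean 2) := by
  have hm : (card s : ℝ) - 1 ≠ 0 := by
    have : (2 : ℝ) ≤ card s := by exact_mod_cast hs
    linarith
  have h1 : s.esymmMean 1 = s.sum / card s := by simp [esymmMean, esymm_one]
  have h2 : s.esymmMean 2 = (s.sum ^ 2 - (s.map (· ^ 2)).sum) / (card s * (card s - 1)) := by
    rw [esymmMean, Nat.cast_choose_two, sum_map_sq_eq_esymm, esymm_one]
    field_simp
    ring
  rw [sum_map_sub_sq, h2, h1]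
  field_simp
  ring

theorem esymmMean_two_le_sq {s : Multiset ℝ} (hs : 2 ≤ card s) :
    s.esymmMean 2 ≤ s.esymmMean 1 ^ 2 := by
  have hm : (0 : ℝ) < card s * (card s - 1) := by
    have : (2 : ℝ) ≤ card s := by exact_mod_cast hs
    nlinarith
  have hvar := sum_map_sq_sub_esymmMean_one hs
  have : 0 ≤ (s.map fun a => (a - s.esymmMean 1) ^ 2).sum :=
    sum_nonneg fun x hx => by obtain ⟨a, -, rfl⟩ := mem_map.1 hx; positivity
  nlinarith

theorem esymmMean_two_eq_sq_iff {s : Multiset ℝ} (hs : 2 ≤ card s) :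
    s.esymmMean 2 = s.esymmMean 1 ^ 2 ↔ ∀ a ∈ s, ∀ b ∈ s, a = b := by
  have hm : (card s : ℝ) * (card s - 1) ≠ 0 := by
    have : (2 : ℝ) ≤ card s := by exact_mod_cast hs
    nlinarith
  rw [← sub_eq_zero, ← neg_sub, neg_eq_zero, ← mul_eq_zero_iff_left hm,
    ← sum_map_sq_sub_esymmMean_one hs]
  constructor
  · intro h
    have hc : ∀ a ∈ s, a = s.esymmMean 1 := fun a ha => by
      have := all_zero_of_le_zero_le_of_sum_eq_zero
        (fun x hx => by obtain ⟨a, -, rfl⟩ := mem_map.1 hx; positivity) h _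
        (mem_map_of_mem _ ha)
      simpa [sub_eq_zero] using this
    exact fun a ha b hb => (hc a ha).trans (hc b hb).symm
  · intro h
    obtain ⟨x, hx⟩ := card_pos_iff_exists_mem.1 (by omega : 0 < card s)
    have hrep : s = replicate (card s) x := eq_replicate.2 ⟨rfl, fun b hb => h b hb x hx⟩
    have hc : s.esymmMean 1 = x := by
      rw [hrep, esymmMean, esymm_one, sum_replicate, card_replicate, Nat.choose_one_right,
        nsmul_eq_mul, mul_div_cancel_left₀ _ (by positivity)]
    rw [hc, hrep]
    simp

open Polynomial in
/-- The roots of the derivative of `∏ (X - a)` have the same means as `s`, by Vieta's formulas;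
that there are `card s - 1` of them is Rolle's theorem. -/
theorem exists_esymmMean_eq_of_card_eq_succ {s : Multiset ℝ} {n : ℕ} (hs : card s = n + 1) :
    ∃ t : Multiset ℝ, card t = n ∧ ∀ k ≤ n, t.esymmMean k = s.esymmMean k := by
  set f : ℝ[X] := (s.map fun a => X - C a).prod
  have hf_monic : f.Monic := monic_multiset_prod_of_monic _ _ fun a _ => monic_X_sub_C a
  have hf_deg : f.natDegree = n + 1 := by rw [natDegree_multiset_prod_X_sub_C_eq_card, hs]
  have hf_roots : f.roots = s := roots_multiset_prod_X_sub_C s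
  set g := derivative f
  have hg_lead : g.coeff n = n + 1 := by
    rw [coeff_derivative, ← hf_deg, hf_monic.coeff_natDegree, one_mul]
  have hg_deg : g.natDegree = n := le_antisymm ((natDegree_derivative_le f).trans (by omega))
    (le_natDegree_of_ne_zero (by rw [hg_lead]; positivity))
  have hg_roots : card g.roots = n := by
    refine le_antisymm (hg_deg ▸ card_roots' g) ?_
    have : card s ≤ card g.roots + 1 := hf_roots ▸ card_roots_le_derivative f
    omega
  refine ⟨g.roots, hg_roots, fun k hk => ?_⟩
  have hvieta_g := coeff_eq_esymm_roots_of_card (hg_roots.trans hg_deg.symm) (k := n - k)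
    (by omega)
  have hvieta_f := coeff_eq_esymm_roots_of_card (p := f) (by rw [hf_roots, hf_deg, hs])
    (k := n - k + 1) (by omega)
  rw [leadingCoeff, hg_deg, hg_lead, show n - (n - k) = k by omega] at hvieta_g
  rw [hf_deg, hf_monic.leadingCoeff, hf_roots, show n + 1 - (n - k + 1) = k by omega] at hvieta_f
  rw [coeff_derivative, hvieta_f] at hvieta_g
  have hchoose : ((n.choose k * (n + 1) : ℕ) : ℝ) = ((n + 1).choose k * (n + 1 - k) : ℕ) :=
    congrArg _ (Nat.choose_mul_succ_eq n k)
  push_cast [Nat.cast_sub hk, Nat.cast_sub (hk.trans n.le_succ)] at hchoose hvieta_g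
  have hC : (n.choose k : ℝ) ≠ 0 := by exact_mod_cast (Nat.choose_pos hk).ne'
  have hC' : ((n + 1).choose k : ℝ) ≠ 0 := by exact_mod_cast (Nat.choose_pos (by omega)).ne'
  rw [esymmMean, esymmMean, hg_roots, hs, div_eq_div_iff hC hC']
  have hsign : ((-1 : ℝ) ^ k) ≠ 0 := by positivity
  apply mul_left_cancel₀ (mul_ne_zero hsign (by positivity : (n : ℝ) + 1 ≠ 0))
  linear_combination (-((n + 1).choose k : ℝ)) * hvieta_g - (-1 : ℝ) ^ k * s.esymm k * hchoose

theorem exists_esymmMean_eq_of_le_card {s : Multiset ℝ} {m : ℕ} (hm : m ≤ card s) :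
    ∃ t : Multiset ℝ, card t = m ∧ ∀ k ≤ m, t.esymmMean k = s.esymmMean k := by
  obtain ⟨d, hd⟩ := Nat.exists_eq_add_of_le hm
  induction d generalizing s with
  | zero => exact ⟨s, by omega, fun _ _ => rfl⟩
  | succ d ih =>
    obtain ⟨u, hu, hus⟩ := exists_esymmMean_eq_of_card_eq_succ (n := m + d) hd
    obtain ⟨t, ht, htu⟩ := ih (s := u) (by omega) hu
    exact ⟨t, ht, fun k hk => (htu k hk).trans (hus k (by omega))⟩

theorem esymmMean_sq_sub_mul_eq_of_card_eq {s : Multiset ℝ} {k : ℕ} (h0 : (0 : ℝ) ∉ s)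
    (hs : card s = k + 2) :
    s.esymmMean (k + 1) ^ 2 - s.esymmMean k * s.esymmMean (k + 2)
      = s.prod ^ 2 * ((s.map Inv.inv).esymmMean 1 ^ 2 - (s.map Inv.inv).esymmMean 2) := by
  rw [esymmMean_eq_prod_mul_esymmMean_inv h0 (i := k + 1) (j := 1) (by omega),
    esymmMean_eq_prod_mul_esymmMean_inv h0 (i := k) (j := 2) (by omega),
    esymmMean_eq_prod_mul_esymmMean_inv h0 (i := k + 2) (j := 0) (by omega), esymmMean_zero]
  ring

theorem esymmMean_mul_le_sq_of_card_eq {s : Multiset ℝ} {k : ℕ} (hs : card s = k + 2) :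
    s.esymmMean k * s.esymmMean (k + 2) ≤ s.esymmMean (k + 1) ^ 2 := by
  by_cases h0 : (0 : ℝ) ∈ s
  · rw [← hs, esymmMean_card, prod_eq_zero h0, mul_zero]
    positivity
  · have hgap := esymmMean_sq_sub_mul_eq_of_card_eq h0 hs
    have hinv := esymmMean_two_le_sq (s := s.map Inv.inv) (by rw [card_map]; omega)
    nlinarith [sq_nonneg s.prod]

theorem eq_of_esymmMean_mul_eq_sq_of_card_eq {s : Multiset ℝ} {k : ℕ} (hs : card s = k + 2)
    (h : s.esymmMean k * s.esymmMean (k + 2) = s.esymmMean (k + 1) ^ 2)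
    (hne : s.esymmMean (k + 2) ≠ 0) : ∀ a ∈ s, ∀ b ∈ s, a = b := by
  rw [← hs, esymmMean_card] at hne
  have h0 : (0 : ℝ) ∉ s := fun h => hne (prod_eq_zero h)
  have hgap := esymmMean_sq_sub_mul_eq_of_card_eq h0 hs
  rw [← h, sub_self, eq_comm, mul_eq_zero, sub_eq_zero] at hgap
  have hinv := (esymmMean_two_eq_sq_iff (s := s.map Inv.inv) (by rw [card_map]; omega)).1
    (hgap.resolve_left (pow_ne_zero 2 hne)).symm
  exact fun a ha b hb => inv_injective (hinv _ (mem_map_of_mem _ ha) _ (mem_map_of_mem _ hb))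

theorem esymmMean_mul_le_sq (s : Multiset ℝ) (k : ℕ) :
    s.esymmMean k * s.esymmMean (k + 2) ≤ s.esymmMean (k + 1) ^ 2 := by
  rcases le_or_gt (k + 2) (card s) with hk | hk
  · obtain ⟨t, ht, hts⟩ := exists_esymmMean_eq_of_le_card hk
    rw [← hts k (by omega), ← hts (k + 1) (by omega), ← hts (k + 2) le_rfl]
    exact esymmMean_mul_le_sq_of_card_eq ht
  · rw [esymmMean_eq_zero_of_card_lt hk, mul_zero]
    positivity

theorem eq_of_esymmMean_mul_eq_sq {s : Multiset ℝ} {k : ℕ}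
    (h : s.esymmMean k * s.esymmMean (k + 2) = s.esymmMean (k + 1) ^ 2)
    (hne : s.esymmMean (k + 2) ≠ 0) : ∀ a ∈ s, ∀ b ∈ s, a = b := by
  have hk : k + 2 ≤ card s := by
    by_contra! hk
    exact hne (esymmMean_eq_zero_of_card_lt hk)
  obtain ⟨t, ht, hts⟩ := exists_esymmMean_eq_of_le_card hk
  rw [← hts k (by omega), ← hts (k + 1) (by omega), ← hts (k + 2) le_rfl] at h
  rw [← hts (k + 2) le_rfl] at hne
  have ht_const := eq_of_esymmMean_mul_eq_sq_of_card_eq ht h hne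
  rw [← esymmMean_two_eq_sq_iff (by omega), ← hts 1 (by omega), ← hts 2 (by omega)]
  exact (esymmMean_two_eq_sq_iff (by omega)).2 ht_const

end Multiset

theorem monotoneOn_Iic_of_mul_le_sq {p : ℕ → ℝ} {k : ℕ} (hpos : ∀ j ≤ k, 0 < p j)
    (hnewton : ∀ j < k, p j * p (j + 2) ≤ p (j + 1) ^ 2) (htop : p k ≤ p (k + 1)) :
    MonotoneOn p (Set.Iic (k + 1)) := by
  have hstep : ∀ j ≤ k, p j ≤ p (j + 1) := by
    intro j hj
    induction hj using Nat.decreasingInduction with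
    | self => exact htop
    | of_succ j hj ih =>
      have h1 : 0 < p (j + 1) := hpos (j + 1) hj
      refine le_of_mul_le_mul_right ?_ (h1.trans_le ih)
      calc p j * p (j + 2) ≤ p (j + 1) ^ 2 := hnewton j hj
        _ = p (j + 1) * p (j + 1) := sq _
        _ ≤ p (j + 1) * p (j + 2) := mul_le_mul_of_nonneg_left ih h1.le
  refine monotoneOn_of_le_succ Set.ordConnected_Iic fun j _ _ hj => ?_
  rw [Order.succ_eq_add_one] at hj ⊢
  exact hstep j (by simpa using hj)

theorem Svec_eq_esymm (n k : ℕ) (lam : Fin n → ℝ) :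
    Svec n k lam = (Finset.univ.val.map lam).esymm k :=
  (Finset.esymm_map_val lam _ k).symm

theorem esymmMean_map_univ (n k : ℕ) (lam : Fin n → ℝ) :
    (Finset.univ.val.map lam).esymmMean k = Svec n k lam / n.choose k := by
  rw [Multiset.esymmMean, Svec_eq_esymm, Multiset.card_map, Finset.card_val, Finset.card_univ,
    Fintype.card_fin]

theorem maclaurin_equality_case_general
    (n k l : ℕ) (hlk : l < k)
    (lam : Fin n → ℝ) (hlam : lam ∈ GardingCone n k)
    (heq : Svec n k lam / (n.choose k : ℝ) = Svec n l lam / (n.choose l : ℝ))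
    (heq2 : Svec n (k + 1) lam / (n.choose (k + 1) : ℝ)
      = Svec n k lam / (n.choose k : ℝ)) :
    ∀ i j : Fin n, lam i = lam j := by
  set s := Finset.univ.val.map lam
  simp only [← esymmMean_map_univ] at heq heq2
  have hpos : ∀ j ≤ k, 0 < s.esymmMean j := fun j hj => by
    rcases j.eq_zero_or_pos with rfl | hj0
    · exact s.esymmMean_zero ▸ one_pos
    · exact Multiset.esymmMean_pos (Svec_eq_esymm n j lam ▸ hlam j hj0 hj)
  have hmono := monotoneOn_Iic_of_mul_le_sq hpos (fun j _ => s.esymmMean_mul_le_sq j) heq2.ge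
  obtain ⟨k, rfl⟩ : ∃ k', k = k' + 1 := ⟨k - 1, by omega⟩
  have hk : s.esymmMean k = s.esymmMean (k + 1) :=
    le_antisymm (hmono (Set.mem_Iic.2 (by omega)) (Set.mem_Iic.2 (by omega)) (by omega))
      (heq ▸ hmono (Set.mem_Iic.2 (by omega)) (Set.mem_Iic.2 (by omega)) (by omega))
  have hconst := Multiset.eq_of_esymmMean_mul_eq_sq (s := s) (k := k)
    (by rw [hk, heq2, sq]) (heq2 ▸ (hpos _ le_rfl).ne')
  exact fun i j => hconst _ (Multiset.mem_map_of_mem _ (Finset.mem_univ_val i)) _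
    (Multiset.mem_map_of_mem _ (Finset.mem_univ_val j))

/-- Equality case: if `λ ∈ Γ_k`, `S_k/C_n^k = S_l/C_n^l` and `S_{k+1}/C_n^{k+1} = S_k/C_n^k`,
then all the components of `λ` are equal. -/
theorem maclaurin_equality_case
    (n k l : ℕ) (hn : 2 ≤ n) (hlk : l < k) (hkn : k ≤ n - 1)
    (lam : Fin n → ℝ) (hlam : lam ∈ GardingCone n k)
    (heq : Svec n k lam / (n.choose k : ℝ) = Svec n l lam / (n.choose l : ℝ))
    (heq2 : Svec n (k + 1) lam / (n.choose (k + 1) : ℝ)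
      = Svec n k lam / (n.choose k : ℝ)) :
    ∀ i j : Fin n, lam i = lam j :=
  maclaurin_equality_case_general n k l hlk lam hlam heq heq2
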